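/- (Theorem 3.1, converse direction, for the Euclidean metric.) Let λ > 0, let U ⊆ ℝ³ be open and connected, and let A : U → ℝ³ be twice continuously differentiable with ‖A(p)‖ = 1, (D A)(p)(A(p)) = 0 (geodesic congruence), and ‖curl A(p)‖ = 2λ (constant nonzero twist) for all p ∈ U. Then either curl A = 2λ A on all of U or curl A = −2λ A on all of U (so the dual 1-form of A or of −A is an adapted contact form with dα = 2λ∗α), and moreover div A = 0 on U (the congruence is divergence-free). -/

import Mathlib

/-! Differentiating `‖A‖ = 1` gives `(D A)ᵀ A = 0`, and the geodesic condition is `(D A) A = 0`,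
so `A` lies in the kernel of the antisymmetric part of `D A`. That part is `v ↦ curl A × v`, hence
`curl A × A = 0` and `curl A = ⟪curl A, A⟫ A`. The coefficient `⟪curl A, A⟫` is continuous with
absolute value `2λ`, so it has constant sign on the connected set `U`. Finally, `curl A = c A` with
`c ≠ 0` gives `c div A = div curl A = 0` by symmetry of second derivatives. -/

noncomputable section

/-- ℝ³ with the Euclidean metric. -/
abbrev E3 := EuclideanSpace ℝ (Fin 3)

/-- The `i`-th component of a vector field on `E3`. -/
def comp3 (A : E3 → E3) (i : Fin 3) (p : E3) : ℝ := (WithLp.equiv 2 (Fin 3 → ℝ)) (A p) i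

/-- Partial derivative in the `i`-th coordinate direction. -/
def pd3 (i : Fin 3) (f : E3 → ℝ) (p : E3) : ℝ := fderiv ℝ f p (EuclideanSpace.single i 1)

/-- The curl of a vector field on Euclidean ℝ³. -/
def curl3 (A : E3 → E3) (p : E3) : E3 :=
  (WithLp.equiv 2 (Fin 3 → ℝ)).symm
    ![pd3 1 (comp3 A 2) p - pd3 2 (comp3 A 1) p,
      pd3 2 (comp3 A 0) p - pd3 0 (comp3 A 2) p,
      pd3 0 (comp3 A 1) p - pd3 1 (comp3 A 0) p]

/-- The divergence of a vector field on Euclidean ℝ³. -/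
def div3 (A : E3 → E3) (p : E3) : ℝ :=
  pd3 0 (comp3 A 0) p + pd3 1 (comp3 A 1) p + pd3 2 (comp3 A 2) p

open Matrix Filter Topology
open scoped InnerProductSpace

namespace Matrix

variable {R : Type*} [CommRing R]

def skewAxial (g : Matrix (Fin 3) (Fin 3) R) : Fin 3 → R :=
  ![g 2 1 - g 1 2, g 0 2 - g 2 0, g 1 0 - g 0 1]

theorem skewAxial_cross (g : Matrix (Fin 3) (Fin 3) R) (v : Fin 3 → R) :
    skewAxial g ⨯₃ v = (g - gᵀ) *ᵥ v := by
  ext i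
  fin_cases i <;> simp [skewAxial, cross_apply, mulVec, dotProduct, Fin.sum_univ_three] <;> ring

theorem eq_dotProduct_smul_of_cross_eq_zero {w a : Fin 3 → R} (ha : a ⬝ᵥ a = 1)
    (h : w ⨯₃ a = 0) : w = (w ⬝ᵥ a) • a := by
  have := cross_cross_eq_smul_sub_smul' a w a
  rwa [h, map_zero, ha, one_smul, eq_comm, sub_eq_zero] at this

theorem skewAxial_eq_dotProduct_smul {g : Matrix (Fin 3) (Fin 3) R} {a : Fin 3 → R}
    (ha : a ⬝ᵥ a = 1) (hg : g *ᵥ a = 0) (hgt : gᵀ *ᵥ a = 0) :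
    skewAxial g = (skewAxial g ⬝ᵥ a) • a :=
  eq_dotProduct_smul_of_cross_eq_zero ha <| by rw [skewAxial_cross, sub_mulVec, hg, hgt, sub_zero]

end Matrix

theorem inner_fderiv_apply_eq_zero_of_norm_eventually_eq {E F : Type*} [NormedAddCommGroup E]
    [NormedSpace ℝ E] [NormedAddCommGroup F] [InnerProductSpace ℝ F] {A : E → F} {p : E} {c : ℝ}
    (hA : DifferentiableAt ℝ A p) (hnorm : ∀ᶠ x in 𝓝 p, ‖A x‖ = c) (v : E) :
    ⟪A p, fderiv ℝ A p v⟫_ℝ = 0 := by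
  have hconst : (fun x => ⟪A x, A x⟫_ℝ) =ᶠ[𝓝 p] fun _ => c ^ 2 := by
    filter_upwards [hnorm] with x hx
    rw [real_inner_self_eq_norm_sq, hx]
  have h := fderiv_inner_apply (𝕜 := ℝ) hA hA v
  rw [hconst.fderiv_eq, fderiv_const_apply, _root_.zero_apply, real_inner_comm (A p)] at h
  linarith

section VectorCalculus

variable {A : E3 → E3} {f g : E3 → ℝ} {U : Set E3} {p : E3}

theorem contDiffOn_comp3 {n : WithTop ℕ∞} (hA : ContDiffOn ℝ n A U) (i : Fin 3) :
    ContDiffOn ℝ n (comp3 A i) U :=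
  (EuclideanSpace.proj (𝕜 := ℝ) i).contDiff.comp_contDiffOn hA

theorem differentiableAt_comp3 (hA : DifferentiableAt ℝ A p) (i : Fin 3) :
    DifferentiableAt ℝ (comp3 A i) p :=
  (EuclideanSpace.proj (𝕜 := ℝ) i).differentiableAt.comp p hA

theorem pd3_comp3 (hA : DifferentiableAt ℝ A p) (i j : Fin 3) :
    pd3 j (comp3 A i) p = fderiv ℝ A p (EuclideanSpace.single j 1) i := by
  change fderiv ℝ (EuclideanSpace.proj i ∘ A) p _ = _
  rw [fderiv_comp p (EuclideanSpace.proj i).differentiableAt hA, ContinuousLinearMap.fderiv]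
  rfl

theorem pd3_sub (hf : DifferentiableAt ℝ f p) (hg : DifferentiableAt ℝ g p) (i : Fin 3) :
    pd3 i (fun x => f x - g x) p = pd3 i f p - pd3 i g p := by
  rw [pd3, fderiv_fun_sub hf hg]
  rfl

theorem pd3_const_mul (hf : DifferentiableAt ℝ f p) (c : ℝ) (i : Fin 3) :
    pd3 i (fun x => c * f x) p = c * pd3 i f p := by
  rw [pd3, fderiv_const_mul hf]
  rfl

theorem pd3_congr (h : f =ᶠ[𝓝 p] g) (i : Fin 3) : pd3 i f p = pd3 i g p := by
  rw [pd3, pd3, h.fderiv_eq]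

theorem hasFDerivAt_pd3 (hU : IsOpen U) (hf : ContDiffOn ℝ 2 f U) (hp : p ∈ U) (j : Fin 3) :
    HasFDerivAt (pd3 j f)
      ((ContinuousLinearMap.apply ℝ ℝ (EuclideanSpace.single j 1)).comp
        (fderiv ℝ (fderiv ℝ f) p)) p := by
  have h : DifferentiableAt ℝ (fderiv ℝ f) p :=
    ((hf.fderiv_of_isOpen hU (by norm_num : (1 : WithTop ℕ∞) + 1 ≤ 2)).differentiableOn
      one_ne_zero).differentiableAt (hU.mem_nhds hp)
  exact (ContinuousLinearMap.apply ℝ ℝ _).hasFDerivAt.comp p h.hasFDerivAt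

theorem pd3_pd3_comm (hU : IsOpen U) (hf : ContDiffOn ℝ 2 f U) (hp : p ∈ U) (i j : Fin 3) :
    pd3 i (pd3 j f) p = pd3 j (pd3 i f) p := by
  have hsymm : IsSymmSndFDerivAt ℝ f p :=
    (hf.contDiffAt (hU.mem_nhds hp)).isSymmSndFDerivAt
      (by simp [minSmoothness_of_isRCLikeNormedField])
  rw [pd3, pd3, (hasFDerivAt_pd3 hU hf hp j).fderiv, (hasFDerivAt_pd3 hU hf hp i).fderiv]
  exact hsymm _ _

theorem continuousOn_pd3 (hU : IsOpen U) (hf : ContDiffOn ℝ 1 f U) (j : Fin 3) :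
    ContinuousOn (pd3 j f) U :=
  (ContinuousLinearMap.apply ℝ ℝ (EuclideanSpace.single j (1 : ℝ))).continuous.comp_continuousOn
    (hf.continuousOn_fderiv_of_isOpen hU le_rfl)

theorem continuousOn_curl3 (hU : IsOpen U) (hA : ContDiffOn ℝ 1 A U) :
    ContinuousOn (curl3 A) U := by
  have h i j : ContinuousOn (pd3 j (comp3 A i)) U := continuousOn_pd3 hU (contDiffOn_comp3 hA i) j
  refine (PiLp.continuous_toLp 2 _).comp_continuousOn (continuousOn_pi.2 fun k => ?_)
  fin_cases k
  exacts [(h 2 1).sub (h 1 2), (h 0 2).sub (h 2 0), (h 1 0).sub (h 0 1)]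

end VectorCalculus

section Jacobian

variable {A : E3 → E3} {p : E3}

def jacobian3 (A : E3 → E3) (p : E3) : Matrix (Fin 3) (Fin 3) ℝ :=
  Matrix.of fun i j => pd3 j (comp3 A i) p

theorem curl3_eq_toLp_skewAxial (A : E3 → E3) (p : E3) :
    curl3 A p = WithLp.toLp 2 (skewAxial (jacobian3 A p)) :=
  rfl

theorem jacobian3_mulVec (hA : DifferentiableAt ℝ A p) (v : E3) :
    jacobian3 A p *ᵥ v = fderiv ℝ A p v := by
  conv_rhs => rw [← (EuclideanSpace.basisFun (Fin 3) ℝ).sum_repr v]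
  ext i
  simp [jacobian3, pd3_comp3 hA, mulVec, dotProduct, mul_comm]

theorem jacobian3_transpose_mulVec (hA : DifferentiableAt ℝ A p) (v : E3) (j : Fin 3) :
    ((jacobian3 A p)ᵀ *ᵥ v) j = ⟪v, fderiv ℝ A p (EuclideanSpace.single j 1)⟫_ℝ := by
  simp [jacobian3, pd3_comp3 hA, mulVec, dotProduct, EuclideanSpace.inner_eq_star_dotProduct]

theorem curl3_eq_inner_smul (hA : DifferentiableAt ℝ A p) (hunit : ∀ᶠ x in 𝓝 p, ‖A x‖ = 1)
    (hgeo : fderiv ℝ A p (A p) = 0) : curl3 A p = ⟪curl3 A p, A p⟫_ℝ • A p := by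
  have hnorm : A p ⬝ᵥ A p = 1 := by
    have h := real_inner_self_eq_norm_sq (A p)
    rwa [hunit.self_of_nhds, one_pow, EuclideanSpace.inner_eq_star_dotProduct, star_trivial] at h
  have hg : jacobian3 A p *ᵥ A p = 0 := by
    rw [jacobian3_mulVec hA, hgeo]; rfl
  have hgt : (jacobian3 A p)ᵀ *ᵥ A p = 0 := funext fun j => by
    rw [jacobian3_transpose_mulVec hA]
    exact inner_fderiv_apply_eq_zero_of_norm_eventually_eq hA hunit _
  have key := skewAxial_eq_dotProduct_smul hnorm hg hgt
  rw [curl3_eq_toLp_skewAxial]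
  ext i
  simpa [EuclideanSpace.inner_eq_star_dotProduct, dotProduct_comm] using congrFun key i

end Jacobian

section Divergence

variable {A B : E3 → E3} {U : Set E3} {p : E3}

theorem div3_curl3 (hU : IsOpen U) (hA : ContDiffOn ℝ 2 A U) (hp : p ∈ U) :
    div3 (curl3 A) p = 0 := by
  have hd i j : DifferentiableAt ℝ (pd3 j (comp3 A i)) p :=
    (hasFDerivAt_pd3 hU (contDiffOn_comp3 hA i) hp j).differentiableAt
  have hcomm i j k := pd3_pd3_comm hU (contDiffOn_comp3 hA i) hp j k
  change pd3 0 (fun x => pd3 1 (comp3 A 2) x - pd3 2 (comp3 A 1) x) p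
    + pd3 1 (fun x => pd3 2 (comp3 A 0) x - pd3 0 (comp3 A 2) x) p
    + pd3 2 (fun x => pd3 0 (comp3 A 1) x - pd3 1 (comp3 A 0) x) p = 0
  rw [pd3_sub (hd 2 1) (hd 1 2), pd3_sub (hd 0 2) (hd 2 0), pd3_sub (hd 1 0) (hd 0 1),
    hcomm 2 0 1, hcomm 1 0 2, hcomm 0 1 2]
  ring

theorem div3_congr (h : A =ᶠ[𝓝 p] B) : div3 A p = div3 B p := by
  have hcomp i : comp3 A i =ᶠ[𝓝 p] comp3 B i := h.fun_comp (· i)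
  simp only [div3, pd3_congr (hcomp _)]

theorem div3_const_smul (hA : DifferentiableAt ℝ A p) (c : ℝ) :
    div3 (fun x => c • A x) p = c * div3 A p := by
  change pd3 0 (fun x => c * comp3 A 0 x) p + pd3 1 (fun x => c * comp3 A 1 x) p
    + pd3 2 (fun x => c * comp3 A 2 x) p = _
  simp only [pd3_const_mul (differentiableAt_comp3 hA _), div3]
  ring

theorem div3_eq_zero_of_curl3_eq_smul (hU : IsOpen U) (hA : ContDiffOn ℝ 2 A U) {c : ℝ}
    (hc : c ≠ 0) (hcurl : ∀ x ∈ U, curl3 A x = c • A x) (hp : p ∈ U) : div3 A p = 0 := by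
  have hAp : DifferentiableAt ℝ A p :=
    (hA.differentiableOn two_ne_zero).differentiableAt (hU.mem_nhds hp)
  have h : c * div3 A p = 0 := by
    rw [← div3_const_smul hAp, ← div3_congr (eventually_of_mem (hU.mem_nhds hp) hcurl),
      div3_curl3 hU hA hp]
  exact (mul_eq_zero.1 h).resolve_left hc

end Divergence

/-- Theorem 3.1, converse direction, for the Euclidean metric: a unit vector field whose integral
curves form a geodesic congruence of constant nonzero twist `λ` satisfies `curl A = ±2λA`
(so `A` or `-A` is dual to an adapted contact form), and is divergence-free. -/
theorem stmt4 (lam : ℝ) (hlam : 0 < lam) (U : Set E3) (hU : IsOpen U)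
    (hconn : IsConnected U) (A : E3 → E3)
    (hC2 : ContDiffOn ℝ 2 A U)
    (hunit : ∀ p ∈ U, ‖A p‖ = 1)
    (hgeo : ∀ p ∈ U, fderiv ℝ A p (A p) = 0)
    (htwist : ∀ p ∈ U, ‖curl3 A p‖ = 2 * lam) :
    ((∀ p ∈ U, curl3 A p = (2 * lam) • A p) ∨
      (∀ p ∈ U, curl3 A p = (-(2 * lam)) • A p)) ∧
    (∀ p ∈ U, div3 A p = 0) := by
  set twist : E3 → ℝ := fun p => ⟪curl3 A p, A p⟫_ℝ
  have hparallel : ∀ p ∈ U, curl3 A p = twist p • A p := fun p hp =>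
    curl3_eq_inner_smul ((hC2.differentiableOn two_ne_zero).differentiableAt (hU.mem_nhds hp))
      (eventually_of_mem (hU.mem_nhds hp) hunit) (hgeo p hp)
  have hsq : Set.EqOn (twist ^ 2) (fun _ => (2 * lam) ^ 2) U := fun p hp => by
    rw [Pi.pow_apply, ← htwist p hp, hparallel p hp, norm_smul, hunit p hp, mul_one,
      Real.norm_eq_abs, sq_abs]
  have hcont : ContinuousOn twist U :=
    (continuousOn_curl3 hU (hC2.of_le one_le_two)).inner hC2.continuousOn
  rcases hconn.isPreconnected.eq_or_eq_neg_of_sq_eq hcont continuousOn_const hsq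
    (fun _ => by positivity) with h | h
  · have hcurl : ∀ p ∈ U, curl3 A p = (2 * lam) • A p := fun p hp => by rw [hparallel p hp, h hp]
    exact ⟨.inl hcurl, fun _ => div3_eq_zero_of_curl3_eq_smul hU hC2 (by positivity) hcurl⟩
  · have hcurl : ∀ p ∈ U, curl3 A p = (-(2 * lam)) • A p := fun p hp => by
      rw [hparallel p hp, h hp, Pi.neg_apply]
    exact ⟨.inr hcurl, fun _ => div3_eq_zero_of_curl3_eq_smul hU hC2 (by linarith) hcurl⟩

end
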